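/- arXiv:2009.05646 — 4 statements merged into one kernel-verified Lean document; each statement's English description precedes it below -/
import Mathlib

section
/- Let T be a numerical set with T ≠ ℕ. There exists a numerical semigroup S with T = S̃ if and only if: (a) F(T) is not a sum of two elements of T, and (b) for every x, y ∈ T with x, y ≤ F(T) and x + y > F(T), we have x + y − F(T) − 1 ∈ T. -/
open Set

def IsNumericalSet (S : Set ℕ) : Prop := 0 ∈ S ∧ Sᶜ.Finite

def IsNumericalSemigroup (S : Set ℕ) : Prop :=
  IsNumericalSet S ∧ ∀ a ∈ S, ∀ b ∈ S, a + b ∈ S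

/-- The associated set `A(S) = {s ∈ S : s + S ⊆ S}`. -/
def A (S : Set ℕ) : Set ℕ := {s ∈ S | ∀ t ∈ S, s + t ∈ S}

/-- The Frobenius number: the largest gap of `S`. -/
noncomputable def F (S : Set ℕ) : ℕ := sSup Sᶜ

/-- The base: the largest element of `S` below `F S`. -/
noncomputable def B (S : Set ℕ) : ℕ := sSup {s | s ∈ S ∧ s < F S}

/-- The multiplicity: the smallest positive element of `S`. -/
noncomputable def m (S : Set ℕ) : ℕ := sInf {s | s ∈ S ∧ 0 < s}

/-- The complement numerical set (for `S ≠ ℕ`). -/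
noncomputable def Stilde (S : Set ℕ) : Set ℕ :=
  {x | ∃ s ∈ S, s ≤ B S ∧ x = B S - s} ∪ {n | B S ≤ n}

-- The complement operation, with the convention that the complement of ℕ is ℕ.
open Classical in
noncomputable def complOp (S : Set ℕ) : Set ℕ :=
  if S = Set.univ then Set.univ else Stilde S

/-- The genus: the number of gaps. -/
noncomputable def genus (S : Set ℕ) : ℕ := Sᶜ.ncard

/-- The number of boxes with hook length 1. -/
noncomputable def c1 (S : Set ℕ) : ℕ := {n | n ∈ S ∧ n + 1 ∉ S}.ncard

/-- An atom: a positive element not a sum of two positive elements. -/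
def IsAtomOf (S : Set ℕ) (a : ℕ) : Prop :=
  a ∈ S ∧ 0 < a ∧ ¬ ∃ x ∈ S, ∃ y ∈ S, 0 < x ∧ 0 < y ∧ a = x + y

/-- A small atom: an atom smaller than the Frobenius number. -/
def IsSmallAtom (S : Set ℕ) (a : ℕ) : Prop := IsAtomOf S a ∧ a < F S

/-- The embedding dimension: the number of atoms. -/
noncomputable def numAtoms (S : Set ℕ) : ℕ := {a | IsAtomOf S a}.ncard

/-- Maximal embedding dimension. -/
def MaxED (S : Set ℕ) : Prop := numAtoms S = m S

/-!
Write `b = B S`. Membership in `S̃` reads `x ∈ S̃ ↔ b ≤ x ∨ b - x ∈ S`, so below `b` the set `S̃`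
is the mirror image of `S`, and mirroring turns sums `s + t` in `S` into the operation
`(x, y) ↦ x + y - b` on `S̃`. If `S` is a semigroup with `1 ∉ S`, then `F(S̃) = b - 1`; condition
(a) then comes from `S` having no element in `(b, F(S)]`, and (b) from `S` being closed under
sums. Conversely, given `T`, put `b = F(T) + 1` and let `R ⊆ [0, b]` be the mirror image of `T`;
condition (b) makes `R` closed under sums up to `b`, condition (a) says `b + 1 ∉ R + R`, so
`R ∪ [b + 2, ∞)` is a numerical semigroup with Frobenius number `b + 1`, base `b` and
complement `T`.
-/

section Frobenius

variable {S : Set ℕ}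

lemma F_notMem (hS : Sᶜ.Finite) (hne : S ≠ univ) : F S ∉ S :=
  Nat.sSup_mem (nonempty_compl.mpr hne) hS.bddAbove

lemma mem_of_F_lt (hS : Sᶜ.Finite) {n : ℕ} (hn : F S < n) : n ∈ S := by
  by_contra h
  exact hn.not_ge (le_csSup hS.bddAbove h)

lemma F_eq_of_notMem {f : ℕ} (hf : f ∉ S) (hgt : ∀ n, f < n → n ∈ S) : F S = f :=
  IsGreatest.csSup_eq ⟨hf, fun n hn => not_lt.mp fun h => hn (hgt n h)⟩

lemma B_eq_of_forall_le {b : ℕ} (hb : b ∈ S) (hbF : b < F S)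
    (hle : ∀ s ∈ S, s < F S → s ≤ b) : B S = b :=
  IsGreatest.csSup_eq ⟨⟨hb, hbF⟩, fun s hs => hle s hs.1 hs.2⟩

lemma isGreatest_B (hS : IsNumericalSet S) (hne : S ≠ univ) :
    IsGreatest {s | s ∈ S ∧ s < F S} (B S) := by
  have hF : 0 < F S := Nat.pos_of_ne_zero fun h => F_notMem hS.2 hne (h ▸ hS.1)
  have hbdd : BddAbove {s | s ∈ S ∧ s < F S} := ⟨F S, fun _ hs => hs.2.le⟩
  exact ⟨Nat.sSup_mem ⟨0, hS.1, hF⟩ hbdd, fun _ hs => le_csSup hbdd hs⟩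

lemma notMem_of_B_lt_of_le_F (hS : IsNumericalSet S) (hne : S ≠ univ) {n : ℕ}
    (hBn : B S < n) (hnF : n ≤ F S) : n ∉ S := by
  intro hn
  rcases hnF.lt_or_eq with h | rfl
  · exact hBn.not_ge ((isGreatest_B hS hne).2 ⟨hn, h⟩)
  · exact F_notMem hS.2 hne hn

end Frobenius

section Stilde

variable {S : Set ℕ}

lemma mem_Stilde_iff {x : ℕ} : x ∈ Stilde S ↔ B S ≤ x ∨ B S - x ∈ S := by
  simp only [Stilde, mem_union, mem_ofPred]
  constructor
  · rintro (⟨s, hs, hsB, rfl⟩ | h)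
    · rcases Nat.eq_zero_or_pos s with rfl | hs0
      · exact Or.inl le_rfl
      · exact Or.inr (by rwa [Nat.sub_sub_self hsB])
    · exact Or.inl h
  · rintro (h | h)
    · exact Or.inr h
    · rcases le_total (B S) x with h' | h'
      · exact Or.inr h'
      · exact Or.inl ⟨B S - x, h, Nat.sub_le _ _, (Nat.sub_sub_self h').symm⟩

lemma B_pos_of_Stilde_ne_univ (h : Stilde S ≠ univ) : 0 < B S :=
  Nat.pos_of_ne_zero fun h0 =>
    h (eq_univ_of_forall fun x => mem_Stilde_iff.2 (Or.inl (h0 ▸ Nat.zero_le x)))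

lemma F_Stilde (h1 : 1 ∉ S) (hB : 0 < B S) : F (Stilde S) = B S - 1 := by
  refine F_eq_of_notMem ?_ fun n hn => mem_Stilde_iff.2 (Or.inl (by omega))
  rw [mem_Stilde_iff, Nat.sub_sub_self hB]
  rintro (h | h)
  · omega
  · exact h1 h

end Stilde

namespace IsNumericalSemigroup

variable {S : Set ℕ}

lemma one_notMem (hS : IsNumericalSemigroup S) (hne : S ≠ univ) : 1 ∉ S := by
  intro h1
  refine hne (eq_univ_of_forall fun n => ?_)
  induction n with
  | zero => exact hS.1.1
  | succ k ih => exact hS.2 k ih 1 h1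

lemma add_ne_F_Stilde (hS : IsNumericalSemigroup S) (hne : S ≠ univ) (hT : Stilde S ≠ univ)
    {x y : ℕ} (hx : x ∈ Stilde S) (hy : y ∈ Stilde S) : x + y ≠ F (Stilde S) := by
  have hB := B_pos_of_Stilde_ne_univ hT
  rw [F_Stilde (hS.one_notMem hne) hB]
  intro hxy
  rw [mem_Stilde_iff] at hx hy
  have hsum : (B S - x) + (B S - y) ∈ S :=
    hS.2 _ (hx.resolve_left (by omega)) _ (hy.resolve_left (by omega))
  have hBF := (isGreatest_B hS.1 hne).1.2
  exact notMem_of_B_lt_of_le_F hS.1 hne (by omega) (by omega) hsum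

lemma sub_mem_Stilde (hS : IsNumericalSemigroup S) (hne : S ≠ univ) (hT : Stilde S ≠ univ)
    {x y : ℕ} (hx : x ∈ Stilde S) (hy : y ∈ Stilde S) (hxF : x ≤ F (Stilde S))
    (hyF : y ≤ F (Stilde S)) (hxy : F (Stilde S) < x + y) : x + y - (F (Stilde S) + 1) ∈ Stilde S := by
  have hB := B_pos_of_Stilde_ne_univ hT
  rw [F_Stilde (hS.one_notMem hne) hB] at *
  rw [mem_Stilde_iff] at hx hy ⊢
  have hsum : B S - (x + y - (B S - 1 + 1)) = (B S - x) + (B S - y) := by omega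
  rw [hsum]
  exact Or.inr (hS.2 _ (hx.resolve_left (by omega)) _ (hy.resolve_left (by omega)))

end IsNumericalSemigroup

section UnionIci

variable {R : Set ℕ} {b : ℕ}

lemma isNumericalSemigroup_union_Ici (h0 : 0 ∈ R)
    (hadd : ∀ x ∈ R, ∀ y ∈ R, x + y ≤ b → x + y ∈ R)
    (hgap : ∀ x ∈ R, ∀ y ∈ R, x + y ≠ b + 1) :
    IsNumericalSemigroup (R ∪ Ici (b + 2)) := by
  refine ⟨⟨Or.inl h0, (finite_Iio (b + 2)).subset fun n hn => ?_⟩, ?_⟩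
  · simp only [mem_compl_iff, mem_union, mem_Ici, not_or, not_le] at hn
    exact hn.2
  · rintro x (hx | hx) y (hy | hy)
    · rcases le_or_gt (x + y) b with h | h
      · exact Or.inl (hadd x hx y hy h)
      · have := hgap x hx y hy
        exact Or.inr (mem_Ici.2 (by omega))
    all_goals
      simp only [mem_Ici] at *
      exact Or.inr (mem_Ici.2 (by omega))

lemma succ_notMem_union_Ici (hR : ∀ r ∈ R, r ≤ b) : b + 1 ∉ R ∪ Ici (b + 2) := by
  rintro (h | h)
  · exact absurd (hR _ h) (by omega)
  · exact absurd (mem_Ici.1 h) (by omega)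

lemma F_union_Ici (hR : ∀ r ∈ R, r ≤ b) : F (R ∪ Ici (b + 2)) = b + 1 :=
  F_eq_of_notMem (succ_notMem_union_Ici hR) fun _ hn => Or.inr (mem_Ici.2 hn)

lemma B_union_Ici (hR : ∀ r ∈ R, r ≤ b) (hb : b ∈ R) : B (R ∪ Ici (b + 2)) = b := by
  refine B_eq_of_forall_le (Or.inl hb) (by rw [F_union_Ici hR]; omega) ?_
  rw [F_union_Ici hR]
  rintro s (hs | hs) hsF
  · exact hR s hs
  · exact absurd (mem_Ici.1 hs) (by omega)

lemma mem_Stilde_union_Ici_iff (hR : ∀ r ∈ R, r ≤ b) (hb : b ∈ R) {x : ℕ} :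
    x ∈ Stilde (R ∪ Ici (b + 2)) ↔ b ≤ x ∨ b - x ∈ R := by
  rw [mem_Stilde_iff, B_union_Ici hR hb, mem_union, mem_Ici]
  constructor
  · rintro (h | h | h)
    · exact Or.inl h
    · exact Or.inr h
    · omega
  · rintro (h | h)
    · exact Or.inl h
    · exact Or.inr (Or.inl h)

end UnionIci

def mirror (b : ℕ) (T : Set ℕ) : Set ℕ := {r | r ≤ b ∧ b - r ∈ T}

section Mirror

variable {T : Set ℕ}

lemma mem_mirror_iff {b r : ℕ} : r ∈ mirror b T ↔ r ≤ b ∧ b - r ∈ T := Iff.rfl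

lemma add_mem_mirror
    (hsub : ∀ x ∈ T, ∀ y ∈ T, x ≤ F T → y ≤ F T → F T < x + y → x + y - (F T + 1) ∈ T)
    {r s : ℕ} (hr : r ∈ mirror (F T + 1) T) (hs : s ∈ mirror (F T + 1) T)
    (hrs : r + s ≤ F T + 1) : r + s ∈ mirror (F T + 1) T := by
  obtain ⟨hrb, hrT⟩ := hr
  obtain ⟨hsb, hsT⟩ := hs
  refine ⟨hrs, ?_⟩
  rcases Nat.eq_zero_or_pos r with rfl | hr0
  · simpa using hsT
  rcases Nat.eq_zero_or_pos s with rfl | hs0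
  · simpa using hrT
  have h := hsub _ hrT _ hsT (by omega) (by omega) (by omega)
  rwa [show F T + 1 - r + (F T + 1 - s) - (F T + 1) = F T + 1 - (r + s) by omega] at h

lemma add_ne_succ_mirror (hsum : ∀ x ∈ T, ∀ y ∈ T, x + y ≠ F T)
    {r s : ℕ} (hr : r ∈ mirror (F T + 1) T) (hs : s ∈ mirror (F T + 1) T) :
    r + s ≠ F T + 1 + 1 := fun h =>
  hsum _ hr.2 _ hs.2 (by have := hr.1; have := hs.1; omega)

lemma Stilde_mirror_union_Ici (hT : IsNumericalSet T) :
    Stilde (mirror (F T + 1) T ∪ Ici (F T + 1 + 2)) = T := by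
  have hR : ∀ r ∈ mirror (F T + 1) T, r ≤ F T + 1 := fun _ hr => hr.1
  have hb : F T + 1 ∈ mirror (F T + 1) T := ⟨le_rfl, by simpa using hT.1⟩
  ext x
  rw [mem_Stilde_union_Ici_iff hR hb, mem_mirror_iff]
  constructor
  · rintro (h | ⟨-, h⟩)
    · exact mem_of_F_lt hT.2 (by omega)
    · rcases le_or_gt x (F T + 1) with h' | h'
      · rwa [Nat.sub_sub_self h'] at h
      · exact mem_of_F_lt hT.2 (by omega)
  · intro hx
    rcases le_or_gt (F T + 1) x with h | h
    · exact Or.inl h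
    · exact Or.inr ⟨Nat.sub_le _ _, by rwa [Nat.sub_sub_self h.le]⟩

lemma exists_isNumericalSemigroup_Stilde_eq (hT : IsNumericalSet T)
    (hsum : ∀ x ∈ T, ∀ y ∈ T, x + y ≠ F T)
    (hsub : ∀ x ∈ T, ∀ y ∈ T, x ≤ F T → y ≤ F T → F T < x + y → x + y - (F T + 1) ∈ T) :
    ∃ S : Set ℕ, IsNumericalSemigroup S ∧ S ≠ univ ∧ Stilde S = T := by
  refine ⟨mirror (F T + 1) T ∪ Ici (F T + 1 + 2), ?_, ?_, Stilde_mirror_union_Ici hT⟩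
  · refine isNumericalSemigroup_union_Ici ⟨Nat.zero_le _, ?_⟩
      (fun _ hr _ hs => add_mem_mirror hsub hr hs)
      (fun _ hr _ hs => add_ne_succ_mirror hsum hr hs)
    simpa using mem_of_F_lt hT.2 (Nat.lt_succ_self _)
  · exact fun h => succ_notMem_union_Ici (fun _ hr => hr.1) (h ▸ mem_univ (F T + 1 + 1))

end Mirror

theorem complement_of_semigroup_characterization (T : Set ℕ) (hT : IsNumericalSet T)
    (hne : T ≠ Set.univ) :
    (∃ S : Set ℕ, IsNumericalSemigroup S ∧ S ≠ Set.univ ∧ Stilde S = T) ↔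
      ((∀ x ∈ T, ∀ y ∈ T, x + y ≠ F T) ∧
        (∀ x ∈ T, ∀ y ∈ T, x ≤ F T → y ≤ F T → F T < x + y → x + y - (F T + 1) ∈ T)) := by
  constructor
  · rintro ⟨S, hS, hSne, rfl⟩
    exact ⟨fun x hx y hy => hS.add_ne_F_Stilde hSne hne hx hy,
      fun x hx y hy => hS.sub_mem_Stilde hSne hne hx hy⟩
  · rintro ⟨hsum, hsub⟩
    exact exists_isNumericalSemigroup_Stilde_eq hT hsum hsub
end

section
/- Let S be a numerical semigroup with exactly one small atom, i.e., exactly one atom strictly less than F(S). Then every element of S ∩ [0, F(S)] is a multiple of m(S), and the complement S̃ equals m(S)·ℕ ∪ {n : n ≥ B(S)}, which is a numerical semigroup. -/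
open Set

/-! An element of `S` below `F S` is either `0`, a sum of two smaller positive elements of `S`
(which are also below `F S`), or a small atom. If the only small atom is `m S`, strong induction
makes everything in `S` below the Frobenius number a multiple of `m S`; in particular so is
`B S`, and reflecting `S ∩ [0, B S]` about `B S` gives back exactly the multiples of `m S` below
`B S`. -/

section NumericalSet

variable {S : Set ℕ}

theorem ne_univ_of_pos_F (hF : 0 < F S) : S ≠ Set.univ := by
  rintro rfl
  simp [F] at hF

theorem IsNumericalSet.F_notMem (hS : IsNumericalSet S) (hF : 0 < F S) : F S ∉ S :=
  Nat.sSup_mem (Set.nonempty_compl.mpr (ne_univ_of_pos_F hF)) hS.2.bddAbove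

theorem IsNumericalSet.exists_pos_mem (hS : IsNumericalSet S) : ∃ s ∈ S, 0 < s := by
  have hinf : S.Infinite := by simpa using hS.2.infinite_compl
  exact hinf.exists_gt 0

theorem IsNumericalSet.m_mem (hS : IsNumericalSet S) : m S ∈ S :=
  (Nat.sInf_mem hS.exists_pos_mem : m S ∈ {s | s ∈ S ∧ 0 < s}).1

theorem IsNumericalSet.m_pos (hS : IsNumericalSet S) : 0 < m S :=
  (Nat.sInf_mem hS.exists_pos_mem : m S ∈ {s | s ∈ S ∧ 0 < s}).2

theorem m_le_of_mem {s : ℕ} (hs : s ∈ S) (hs0 : 0 < s) : m S ≤ s :=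
  Nat.sInf_le ⟨hs, hs0⟩

theorem IsNumericalSet.isAtomOf_m (hS : IsNumericalSet S) : IsAtomOf S (m S) := by
  refine ⟨hS.m_mem, hS.m_pos, ?_⟩
  rintro ⟨x, hx, y, hy, hx0, hy0, hxy⟩
  have := m_le_of_mem hx hx0
  have := m_le_of_mem hy hy0
  omega

theorem IsNumericalSet.isSmallAtom_m_of_isSmallAtom (hS : IsNumericalSet S) {a : ℕ}
    (ha : IsSmallAtom S a) : IsSmallAtom S (m S) :=
  ⟨hS.isAtomOf_m, (m_le_of_mem ha.1.1 ha.1.2.1).trans_lt ha.2⟩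

theorem IsNumericalSet.eq_m_of_isSmallAtom (hS : IsNumericalSet S)
    (h1 : {a | IsSmallAtom S a}.ncard = 1) {a : ℕ} (ha : IsSmallAtom S a) : a = m S := by
  obtain ⟨b, hb⟩ := Set.ncard_eq_one.mp h1
  have hab : a ∈ {a | IsSmallAtom S a} := ha
  have hmb : m S ∈ {a | IsSmallAtom S a} := hS.isSmallAtom_m_of_isSmallAtom ha
  rw [hb] at hab hmb
  exact hab.trans hmb.symm

theorem B_mem_of_pos_F (h0 : 0 ∈ S) (hF : 0 < F S) : B S ∈ {s | s ∈ S ∧ s < F S} :=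
  Nat.sSup_mem ⟨0, h0, hF⟩ ⟨F S, fun _ hx => hx.2.le⟩

theorem dvd_of_mem_of_lt_F {d : ℕ} (hd : ∀ a, IsSmallAtom S a → d ∣ a) :
    ∀ s ∈ S, s < F S → d ∣ s := by
  intro s
  induction s using Nat.strong_induction_on with
  | _ s ih =>
    intro hs hsF
    rcases Nat.eq_zero_or_pos s with rfl | hpos
    · exact dvd_zero d
    by_cases hsum : ∃ x ∈ S, ∃ y ∈ S, 0 < x ∧ 0 < y ∧ s = x + y
    · obtain ⟨x, hx, y, hy, hx0, hy0, rfl⟩ := hsum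
      exact dvd_add (ih x (by omega) hx (by omega)) (ih y (by omega) hy (by omega))
    · exact hd s ⟨⟨hs, hpos, hsum⟩, hsF⟩

theorem Stilde_eq_of_dvd {d : ℕ} (hdB : d ∣ B S) (hdvd : ∀ s ∈ S, s ≤ B S → d ∣ s)
    (hmul : ∀ k, d * k ∈ S) : Stilde S = {x | d ∣ x} ∪ {n | B S ≤ n} := by
  ext x
  constructor
  · rintro (⟨s, hs, hsB, rfl⟩ | hx)
    · exact Or.inl (Nat.dvd_sub hdB (hdvd s hs hsB))
    · exact Or.inr hx
  · rintro (⟨k, rfl⟩ | hx)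
    · rcases le_or_gt (B S) (d * k) with hB | hB
      · exact Or.inr hB
      · obtain ⟨j, hj⟩ := Nat.dvd_sub hdB (dvd_mul_right d k)
        exact Or.inl ⟨B S - d * k, hj ▸ hmul j, by omega, by omega⟩
    · exact Or.inr hx

end NumericalSet

theorem IsNumericalSemigroup.mul_mem {S : Set ℕ} (hS : IsNumericalSemigroup S) {a : ℕ}
    (ha : a ∈ S) (k : ℕ) : a * k ∈ S := by
  induction k with
  | zero => simpa using hS.1.1
  | succ k ih => simpa [Nat.mul_succ] using hS.2 _ ih _ ha

theorem isNumericalSemigroup_dvd_union_Ici (d b : ℕ) :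
    IsNumericalSemigroup ({x | d ∣ x} ∪ {n | b ≤ n}) := by
  refine ⟨⟨Or.inl (dvd_zero d), (Set.finite_Iio b).subset fun n hn => ?_⟩, ?_⟩
  · simp only [Set.mem_compl_iff, Set.mem_union, Set.mem_ofPred_eq, not_or, not_le] at hn
    exact hn.2
  · rintro x (hx | hx) y (hy | hy)
    · exact Or.inl (dvd_add hx hy)
    all_goals exact Or.inr (by simp only [Set.mem_ofPred_eq] at *; omega)

theorem one_small_atom_complement_general (S : Set ℕ) (hS : IsNumericalSemigroup S)
    (h1 : {a | IsSmallAtom S a}.ncard = 1) :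
    (∀ s ∈ S, s ≤ F S → m S ∣ s) ∧
      Stilde S = {x | m S ∣ x} ∪ {n | B S ≤ n} ∧
      IsNumericalSemigroup (Stilde S) := by
  obtain ⟨a, ha⟩ := Set.nonempty_of_ncard_ne_zero (s := {a | IsSmallAtom S a}) (by omega)
  have hF : 0 < F S := (Nat.zero_le a).trans_lt ha.2
  have hdvd_lt : ∀ s ∈ S, s < F S → m S ∣ s :=
    dvd_of_mem_of_lt_F fun b hb => (hS.1.eq_m_of_isSmallAtom h1 hb).symm ▸ dvd_rfl
  have hdvd : ∀ s ∈ S, s ≤ F S → m S ∣ s := fun s hs hsF =>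
    hdvd_lt s hs (hsF.lt_of_ne fun h => hS.1.F_notMem hF (h ▸ hs))
  obtain ⟨hBS, hBF⟩ := B_mem_of_pos_F hS.1.1 hF
  have hStilde : Stilde S = {x | m S ∣ x} ∪ {n | B S ≤ n} :=
    Stilde_eq_of_dvd (hdvd_lt _ hBS hBF) (fun s hs hsB => hdvd_lt s hs (hsB.trans_lt hBF))
      (hS.mul_mem hS.1.m_mem)
  exact ⟨hdvd, hStilde, hStilde ▸ isNumericalSemigroup_dvd_union_Ici _ _⟩

theorem one_small_atom_complement (S : Set ℕ) (hS : IsNumericalSemigroup S)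
    (hne : S ≠ Set.univ) (h1 : {a | IsSmallAtom S a}.ncard = 1) :
    (∀ s ∈ S, s ≤ F S → m S ∣ s) ∧
      Stilde S = {x | m S ∣ x} ∪ {n | B S ≤ n} ∧
      IsNumericalSemigroup (Stilde S) :=
  one_small_atom_complement_general S hS h1
end

section
/- For any numerical set S, A(S) ⊆ A(S⁽²⁾), where S⁽²⁾ denotes the complement of the complement of S. -/
open Set

/-!
Write `T = S̃`. Below `B(S)` the complement is a reflection, `x ∈ S̃ ↔ B(S) - x ∈ S`, and every
`n ≥ B(S)` lies in `S̃`. Since `B(T) ≤ F(T) ≤ B(S)`, composing two reflections gives a translation: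
with `d = B(S) - B(T)`, one has `S⁽²⁾ = {x | x + d ∈ S} ∪ [B(T), ∞)`, and `d ∈ S` because `B(T) ∈ T`.
Every translate `{x | x + d ∈ S}` with `d ∈ S`, enlarged by a final segment, is stable under
adding elements of `A(S)`.
-/

lemma A_univ : A univ = univ :=
  eq_univ_of_forall fun _ => ⟨mem_univ _, fun _ _ => mem_univ _⟩

lemma complOp_univ : complOp univ = univ := if_pos rfl

lemma complOp_of_ne_univ {S : Set ℕ} (hS : S ≠ univ) : complOp S = Stilde S := if_neg hS

lemma B_le_F (S : Set ℕ) : B S ≤ F S :=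
  csSup_le' fun _ (hs : _ ∧ _) => hs.2.le

lemma mem_Stilde_of_B_le {S : Set ℕ} {x : ℕ} (hx : B S ≤ x) : x ∈ Stilde S :=
  Or.inr hx

lemma mem_Stilde_iff_of_le_B {S : Set ℕ} {x : ℕ} (h0 : 0 ∈ S) (hx : x ≤ B S) :
    x ∈ Stilde S ↔ B S - x ∈ S := by
  refine ⟨?_, fun h => Or.inl ⟨B S - x, h, Nat.sub_le _ _, by omega⟩⟩
  rintro (⟨s, hs, hsB, rfl⟩ | hBx)
  · rwa [Nat.sub_sub_self hsB]
  · rwa [show B S - x = 0 by grind]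

lemma compl_Stilde_subset_Iio (S : Set ℕ) : (Stilde S)ᶜ ⊆ Iio (B S) :=
  fun _ hx => lt_of_not_ge fun h => hx (mem_Stilde_of_B_le h)

lemma F_Stilde_le_B (S : Set ℕ) : F (Stilde S) ≤ B S :=
  csSup_le' fun _ hx => (compl_Stilde_subset_Iio S hx).le

lemma B_Stilde_le_B (S : Set ℕ) : B (Stilde S) ≤ B S :=
  (B_le_F _).trans (F_Stilde_le_B S)

lemma B_mem {S : Set ℕ} (hS : IsNumericalSet S) (hne : S ≠ univ) : B S ∈ S := by
  have hF : F S ∉ S := Nat.sSup_mem (nonempty_compl.2 hne) hS.2.bddAbove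
  have hF_pos : 0 < F S := Nat.pos_of_ne_zero fun h => hF (h ▸ hS.1)
  exact (Nat.sSup_mem (s := {s | s ∈ S ∧ s < F S}) ⟨0, hS.1, hF_pos⟩
    ⟨F S, fun _ hs => hs.2.le⟩).1

lemma isNumericalSet_Stilde {S : Set ℕ} (hS : IsNumericalSet S) (hne : S ≠ univ) :
    IsNumericalSet (Stilde S) :=
  ⟨Or.inl ⟨B S, B_mem hS hne, le_rfl, (Nat.sub_self _).symm⟩,
    (finite_Iio _).subset (compl_Stilde_subset_Iio S)⟩

lemma Stilde_Stilde_eq {S : Set ℕ} (hS : IsNumericalSet S) (hne : S ≠ univ) :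
    Stilde (Stilde S) = {x | x + (B S - B (Stilde S)) ∈ S} ∪ Ici (B (Stilde S)) := by
  have hBB := B_Stilde_le_B S
  ext x
  by_cases hx : B (Stilde S) ≤ x
  · simp only [mem_union, mem_Ici, hx, or_true, mem_Stilde_of_B_le hx]
  · have hxB : B (Stilde S) - x ≤ B S := by omega
    rw [mem_Stilde_iff_of_le_B (isNumericalSet_Stilde hS hne).1 (by omega),
      mem_Stilde_iff_of_le_B hS.1 hxB,
      show B S - (B (Stilde S) - x) = x + (B S - B (Stilde S)) by omega]
    simp only [mem_union, mem_ofPred_eq, mem_Ici, hx, or_false]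

lemma A_subset_A_translate_union_Ici {S : Set ℕ} {d : ℕ} (hd : d ∈ S) (b : ℕ) :
    A S ⊆ A ({x | x + d ∈ S} ∪ Ici b) := by
  rintro a ⟨-, ha⟩
  refine ⟨Or.inl (ha d hd), ?_⟩
  rintro x (hx | hx)
  · exact Or.inl (show a + x + d ∈ S by rw [add_assoc]; exact ha _ hx)
  · exact Or.inr (le_add_left (mem_Ici.1 hx))

theorem associated_subset_associated_double_complement (S : Set ℕ)
    (hS : IsNumericalSet S) : A S ⊆ A (complOp (complOp S)) := by
  by_cases hSu : S = univ
  · simp only [hSu, complOp_univ, A_univ, subset_univ]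
  rw [complOp_of_ne_univ hSu]
  by_cases hTu : Stilde S = univ
  · simp only [hTu, complOp_univ, A_univ, subset_univ]
  have hBT : B (Stilde S) ∈ Stilde S := B_mem (isNumericalSet_Stilde hS hSu) hTu
  have hd : B S - B (Stilde S) ∈ S := (mem_Stilde_iff_of_le_B hS.1 (B_Stilde_le_B S)).1 hBT
  rw [complOp_of_ne_univ hTu, Stilde_Stilde_eq hS hSu]
  exact A_subset_A_translate_union_Ici hd _
end

section
/- A numerical semigroup S ≠ ℕ has maximal embedding dimension (i.e., its number of atoms equals m(S)) if and only if S' = {x − m(S) : x ∈ S, x > 0} is a numerical semigroup. -/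
open Set

/-!
Write `μ = m(S)` and `Ap` for the Apéry set of `μ`, the elements `w ∈ S` with `w - μ ∉ S`. Its
elements are the least elements of `S` in each residue class mod `μ`, so `|Ap| = μ`. Every atom
other than `μ` lies in `Ap \ {0}`, hence `e(S) = μ` exactly when every nonzero element of `Ap` is
an atom, i.e. when no sum `x + y` of positive elements of `S` lies in `Ap`. That says
`x + y - μ ∈ S`, which is closure of `S'` under addition, since
`(x - μ) + (y - μ) = (x + y - μ) - μ`.
-/

/-- The Apéry set `{w ∈ S | w - n ∉ S}`, phrased so that truncated subtraction plays no role. -/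
def apery (S : Set ℕ) (n : ℕ) : Set ℕ := {w | w ∈ S ∧ ∀ s ∈ S, s + n ≠ w}

lemma zero_mem_apery {S : Set ℕ} (h0 : 0 ∈ S) {n : ℕ} (hn : 0 < n) : 0 ∈ apery S n :=
  ⟨h0, fun _ _ => by omega⟩

lemma notMem_apery_self {S : Set ℕ} (h0 : 0 ∈ S) (n : ℕ) : n ∉ apery S n :=
  fun h => h.2 0 h0 (zero_add n)

lemma setOf_isAtomOf_subset_insert_apery {S : Set ℕ} {n : ℕ} (hn : n ∈ S) (hn0 : 0 < n) :
    {a | IsAtomOf S a} ⊆ insert n (apery S n \ {0}) := by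
  rintro a ⟨ha, ha0, hna⟩
  by_cases han : a = n
  · exact .inl han
  refine .inr ⟨⟨ha, fun s hs hsa => ?_⟩, ha0.ne'⟩
  exact hna ⟨s, hs, n, hn, by omega, by omega, hsa.symm⟩

namespace IsNumericalSet

variable {S : Set ℕ}

lemma exists_forall_le_mem (hS : IsNumericalSet S) : ∃ N, ∀ x, N ≤ x → x ∈ S := by
  obtain ⟨N, hN⟩ := hS.2.bddAbove
  exact ⟨N + 1, fun x hx => by_contra fun hxS => by have := hN hxS; omega⟩

lemma m_mem_s17 (hS : IsNumericalSet S) : m S ∈ S ∧ 0 < m S := by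
  obtain ⟨N, hN⟩ := hS.exists_forall_le_mem
  exact Nat.sInf_mem (s := {s | s ∈ S ∧ 0 < s}) ⟨N + 1, hN _ (by omega), by omega⟩

end IsNumericalSet

lemma m_le {S : Set ℕ} {s : ℕ} (hs : s ∈ S) (hs0 : 0 < s) : m S ≤ s :=
  Nat.sInf_le ⟨hs, hs0⟩

namespace IsNumericalSemigroup

variable {S : Set ℕ} (hS : IsNumericalSemigroup S)
include hS

lemma add_mul_mem {a n : ℕ} (ha : a ∈ S) (hn : n ∈ S) (k : ℕ) : a + n * k ∈ S := by
  induction k with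
  | zero => simpa using ha
  | succ k ih => simpa [Nat.mul_succ, ← add_assoc] using hS.2 _ ih _ hn

lemma injOn_mod_apery {n : ℕ} (hn : n ∈ S) : InjOn (· % n) (apery S n) := by
  suffices ∀ a ∈ apery S n, ∀ b ∈ apery S n, a < b → a % n ≠ b % n by
    intro a ha b hb hab
    by_contra hne
    rcases Nat.lt_or_gt_of_ne hne with h | h
    exacts [this a ha b hb h hab, this b hb a ha h hab.symm]
  intro a ha b hb hab heq
  obtain ⟨k, hk⟩ := (Nat.modEq_iff_dvd' hab.le).mp heq
  rcases k with _ | k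
  · omega
  · exact hb.2 _ (hS.add_mul_mem ha.1 hn k) (by rw [Nat.mul_succ] at hk; omega)

lemma image_mod_apery {n : ℕ} (hn0 : 0 < n) : (· % n) '' apery S n = Iio n := by
  refine Subset.antisymm (image_subset_iff.2 fun w _ => Nat.mod_lt w hn0) fun r hr => ?_
  obtain ⟨N, hN⟩ := hS.1.exists_forall_le_mem
  have hne : {w | w ∈ S ∧ w % n = r}.Nonempty :=
    ⟨r + n * N, hN _ (by nlinarith), by simp [Nat.mod_eq_of_lt (mem_Iio.1 hr)]⟩
  obtain ⟨hwS, hwr⟩ := Nat.sInf_mem hne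
  -- The least element of `S` congruent to `r` cannot be `s + n` with `s ∈ S`.
  refine ⟨_, ⟨hwS, fun s hs hsw => ?_⟩, hwr⟩
  have : sInf {w | w ∈ S ∧ w % n = r} ≤ s := Nat.sInf_le ⟨hs, by rw [← hwr, ← hsw]; simp⟩
  omega

lemma finite_apery {n : ℕ} (hn : n ∈ S) (hn0 : 0 < n) : (apery S n).Finite :=
  Finite.of_finite_image (hS.image_mod_apery hn0 ▸ finite_Iio n) (hS.injOn_mod_apery hn)

lemma ncard_apery {n : ℕ} (hn : n ∈ S) (hn0 : 0 < n) : (apery S n).ncard = n := by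
  rw [← (hS.injOn_mod_apery hn).ncard_image, hS.image_mod_apery hn0, ← Finset.coe_Iio,
    ncard_coe_finset, Nat.card_Iio]

lemma numAtoms_eq_iff {n : ℕ} (hn : IsAtomOf S n) :
    numAtoms S = n ↔ apery S n \ {0} ⊆ {a | IsAtomOf S a} := by
  have hnS := hn.1
  have hn0 := hn.2.1
  have hsub := setOf_isAtomOf_subset_insert_apery hnS hn0
  have hfin := (hS.finite_apery hnS hn0).sdiff (t := {0})
  have hcard : (insert n (apery S n \ {0})).ncard = n := by
    rw [ncard_insert_of_notMem (fun h => notMem_apery_self hS.1.1 n h.1) hfin,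
      ncard_sdiff_singleton_of_mem (zero_mem_apery hS.1.1 hn0), hS.ncard_apery hnS hn0]
    omega
  constructor
  · intro h
    rw [eq_of_subset_of_ncard_le hsub (by rw [hcard, ← h]; rfl) (hfin.insert n)]
    exact subset_insert _ _
  · intro h
    rw [numAtoms, hsub.antisymm (insert_subset hn h), hcard]

lemma isAtomOf_m : IsAtomOf S (m S) := by
  obtain ⟨hmS, hm0⟩ := hS.1.m_mem_s17
  refine ⟨hmS, hm0, fun ⟨x, hx, y, hy, hx0, hy0, hxy⟩ => ?_⟩
  have := m_le hx hx0
  have := m_le hy hy0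
  omega

lemma apery_sdiff_zero_subset_iff {n : ℕ} :
    apery S n \ {0} ⊆ {a | IsAtomOf S a} ↔
      ∀ x ∈ S, ∀ y ∈ S, 0 < x → 0 < y → ∃ s ∈ S, s + n = x + y := by
  constructor
  · intro h x hx y hy hx0 hy0
    by_contra! hxy
    have hmem : x + y ∈ apery S n \ {0} := ⟨⟨hS.2 x hx y hy, hxy⟩, by simp; omega⟩
    exact (h hmem).2.2 ⟨x, hx, y, hy, hx0, hy0, rfl⟩
  · rintro h w ⟨⟨hw, hwAp⟩, hw0⟩
    refine ⟨hw, Nat.pos_of_ne_zero hw0, fun ⟨x, hx, y, hy, hx0, hy0, hxy⟩ => ?_⟩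
    obtain ⟨s, hs, hsn⟩ := h x hx y hy hx0 hy0
    exact hwAp s hs (hsn.trans hxy.symm)

lemma isNumericalSet_sub_m : IsNumericalSet {y | ∃ x ∈ S, 0 < x ∧ y = x - m S} := by
  obtain ⟨hmS, hm0⟩ := hS.1.m_mem_s17
  obtain ⟨N, hN⟩ := hS.1.exists_forall_le_mem
  refine ⟨⟨m S, hmS, hm0, by omega⟩, (finite_Iio N).subset fun y hy => ?_⟩
  by_contra hyN
  exact hy ⟨y + m S, hN _ (by simp at hyN; omega), by omega, by omega⟩

lemma isNumericalSemigroup_sub_m_iff :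
    IsNumericalSemigroup {y | ∃ x ∈ S, 0 < x ∧ y = x - m S} ↔
      ∀ x ∈ S, ∀ y ∈ S, 0 < x → 0 < y → ∃ s ∈ S, s + m S = x + y := by
  refine ⟨fun h x hx y hy hx0 hy0 => ?_, fun h => ⟨hS.isNumericalSet_sub_m, ?_⟩⟩
  · obtain ⟨s, hs, hs0, hsxy⟩ := h.2 _ ⟨x, hx, hx0, rfl⟩ _ ⟨y, hy, hy0, rfl⟩
    have := m_le hx hx0
    have := m_le hy hy0
    have := m_le hs hs0
    refine ⟨s, hs, ?_⟩
    omega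
  · rintro _ ⟨x, hx, hx0, rfl⟩ _ ⟨y, hy, hy0, rfl⟩
    obtain ⟨s, hs, hsxy⟩ := h x hx y hy hx0 hy0
    have := m_le hx hx0
    have := m_le hy hy0
    exact ⟨s, hs, by omega, by omega⟩

end IsNumericalSemigroup

theorem max_embedding_dimension_iff_general (S : Set ℕ) (hS : IsNumericalSemigroup S) :
    MaxED S ↔ IsNumericalSemigroup {y | ∃ x ∈ S, 0 < x ∧ y = x - m S} := by
  rw [MaxED, hS.numAtoms_eq_iff hS.isAtomOf_m, hS.apery_sdiff_zero_subset_iff,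
    hS.isNumericalSemigroup_sub_m_iff]

theorem max_embedding_dimension_iff (S : Set ℕ) (hS : IsNumericalSemigroup S)
    (hne : S ≠ Set.univ) :
    MaxED S ↔ IsNumericalSemigroup {y | ∃ x ∈ S, 0 < x ∧ y = x - m S} :=
  max_embedding_dimension_iff_general S hS
end
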